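/- Let V be a finite type, R : V → V → Prop an arc relation, S ⊆ V with s ∈ S, and f : V → V → ℝ nonnegative such that: (i) 0 < f a b implies R a b; (ii) f a b = 0 whenever a ∉ S or b ∉ S; (iii) ∑_{w ∈ V} f v w − ∑_{w ∈ V} f w v = 1 for every v ∈ S with v ≠ s. Let v ∈ S and let C ⊆ V be a vertex cut separating v from s, i.e. v ∉ C, s ∉ C, and ¬ Relation.ReflTransGen (fun a b => R a b ∧ b ∉ C) v s. Then C ∩ S ≠ ∅. Hence every feasible solution of the flow-based formulation satisfies the connectivity cut constraint y_v ≤ ∑_{c ∈ C} y_c for every vertex cut set C separating v from the entrance. -/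

import Mathlib

/-!
Suppose no cell of `C` is active. Along an arc carrying positive flow the head is active, hence
outside `C`, so every cell reached from `v` by following positive flow is active and is joined to
`v` by a path avoiding `C`; by the cut property it is not the entrance, so each such cell has net
outflow `1`. But no flow leaves the set of these cells, so their total net outflow is at most `0`.
-/

open Finset

section Flow

variable {V M : Type*} [Fintype V] [AddCommGroup M]

def netOutflow (f : V → V → M) (u : V) : M := ∑ w, f u w - ∑ w, f w u

theorem sum_netOutflow_eq_sub [DecidableEq V] (f : V → V → M) (T : Finset V) :
    ∑ u ∈ T, netOutflow f u = ∑ u ∈ T, ∑ w ∈ Tᶜ, f u w - ∑ u ∈ T, ∑ w ∈ Tᶜ, f w u := by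
  simp_rw [netOutflow, sum_sub_distrib, ← sum_add_sum_compl T, sum_add_distrib]
  rw [sum_comm (s := T) (t := T) (f := fun u w => f w u)]
  abel

variable [LinearOrder M] [IsOrderedAddMonoid M]

theorem sum_netOutflow_nonpos [DecidableEq V] {f : V → V → M} (hf : ∀ a b, 0 ≤ f a b)
    {T : Finset V} (hT : ∀ u ∈ T, ∀ w ∉ T, f u w = 0) :
    ∑ u ∈ T, netOutflow f u ≤ 0 := by
  have hout : ∑ u ∈ T, ∑ w ∈ Tᶜ, f u w = 0 :=
    sum_eq_zero fun u hu => sum_eq_zero fun w hw => hT u hu w (mem_compl.mp hw)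
  have hin : 0 ≤ ∑ u ∈ T, ∑ w ∈ Tᶜ, f w u :=
    sum_nonneg fun u _ => sum_nonneg fun w _ => hf w u
  rw [sum_netOutflow_eq_sub, hout, zero_sub]
  exact neg_nonpos.mpr hin

theorem exists_reflTransGen_netOutflow_nonpos {f : V → V → M} (hf : ∀ a b, 0 ≤ f a b) (v : V) :
    ∃ u, Relation.ReflTransGen (fun a b => 0 < f a b) v u ∧ netOutflow f u ≤ 0 := by
  classical
  let T := univ.filter (Relation.ReflTransGen (fun a b => 0 < f a b) v)
  have hclosed : ∀ u ∈ T, ∀ w ∉ T, f u w = 0 := by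
    intro u hu w hw
    by_contra hne
    exact hw (mem_filter.mpr ⟨mem_univ w, (mem_filter.mp hu).2.tail ((hf u w).lt_of_ne' hne)⟩)
  by_contra! hpos
  have hvT : v ∈ T := mem_filter.mpr ⟨mem_univ v, .refl⟩
  have hsum : 0 < ∑ u ∈ T, netOutflow f u :=
    sum_pos (fun u hu => hpos u (mem_filter.mp hu).2) ⟨v, hvT⟩
  exact (sum_netOutflow_nonpos hf hclosed).not_gt hsum

end Flow

theorem connectivity_cut_valid_general {V : Type*} [Fintype V] (R : V → V → Prop)
    (S : Set V) (s : V) (f : V → V → ℝ)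
    (hf : ∀ a b : V, 0 ≤ f a b)
    (harc : ∀ a b : V, 0 < f a b → R a b)
    (hsupp : ∀ a b : V, a ∉ S ∨ b ∉ S → f a b = 0)
    (hcons : ∀ v ∈ S, v ≠ s → (∑ w, f v w) - (∑ w, f w v) = 1)
    (v : V) (hv : v ∈ S) (C : Set V)
    (hcut : ¬ Relation.ReflTransGen (fun a b => R a b ∧ b ∉ C) v s) :
    (C ∩ S).Nonempty := by
  by_contra hCS
  have head_mem : ∀ a b, 0 < f a b → b ∈ S := fun a b hab => by
    by_contra hb
    exact hab.ne' (hsupp a b (Or.inr hb))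
  have step_avoids : ∀ a b, 0 < f a b → R a b ∧ b ∉ C := fun a b hab =>
    ⟨harc a b hab, fun hbC => hCS ⟨b, hbC, head_mem a b hab⟩⟩
  obtain ⟨u, hvu, hu⟩ := exists_reflTransGen_netOutflow_nonpos hf v
  have huS : u ∈ S := by
    rcases hvu.cases_tail with rfl | ⟨a, -, hau⟩
    exacts [hv, head_mem a u hau]
  have hus : u ≠ s := by
    rintro rfl
    exact hcut (Relation.ReflTransGen.mono step_avoids _ _ hvu)
  have : netOutflow f u = 1 := hcons u huS hus
  linarith

/-- Validity of the connectivity cut constraints: in any feasible solution of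
the two-way flow formulation, every vertex cut set `C` separating an active
cell `v` from the entrance `s` must contain an active cell. -/
theorem connectivity_cut_valid {V : Type*} [Fintype V] (R : V → V → Prop)
    (S : Set V) (s : V) (hs : s ∈ S) (f : V → V → ℝ)
    (hf : ∀ a b : V, 0 ≤ f a b)
    (harc : ∀ a b : V, 0 < f a b → R a b)
    (hsupp : ∀ a b : V, a ∉ S ∨ b ∉ S → f a b = 0)
    (hcons : ∀ v ∈ S, v ≠ s → (∑ w, f v w) - (∑ w, f w v) = 1)
    (v : V) (hv : v ∈ S) (C : Set V) (hvC : v ∉ C) (hsC : s ∉ C)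
    (hcut : ¬ Relation.ReflTransGen (fun a b => R a b ∧ b ∉ C) v s) :
    (C ∩ S).Nonempty :=
  connectivity_cut_valid_general R S s f hf harc hsupp hcons v hv C hcut
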